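/- Let T be a bounded linear operator on a complex Hilbert space H. Then ‖Re T‖² ≤ (1/2)( ω(T*(Re T)) + ω(T(Re T)) ). -/

import Mathlib

/-!
Write `A = Re T`. Since `‖Ax‖² = Re ⟨A*Ax, x⟩`, we have `‖A‖² ≤ ω(A*A)`, and as `A` is self-adjoint,
`A*A = A² = (T* + T) A / 2 = (T* A + T A) / 2`. The numerical radius is a seminorm, which gives
the bound.
-/

open ContinuousLinearMap

/-- The numerical radius of a bounded linear operator on a complex Hilbert space:
`ω(T) = sup_{‖x‖ = 1} |⟨Tx, x⟩|`. -/
noncomputable def numRadius {H : Type*} [NormedAddCommGroup H] [InnerProductSpace ℂ H]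
    (T : H →L[ℂ] H) : ℝ :=
  ⨆ x : {x : H // ‖x‖ = 1}, ‖(inner ℂ (T x) (x : H) : ℂ)‖

/-- The real part of an operator: `Re(T) = (T + T*)/2`. -/
noncomputable def reOp {H : Type*} [NormedAddCommGroup H] [InnerProductSpace ℂ H]
    [CompleteSpace H] (T : H →L[ℂ] H) : H →L[ℂ] H :=
  (2 : ℂ)⁻¹ • (T + adjoint T)

section NumRadius

variable {H : Type*} [NormedAddCommGroup H] [InnerProductSpace ℂ H]

lemma numRadius_nonneg (S : H →L[ℂ] H) : 0 ≤ numRadius S :=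
  Real.iSup_nonneg fun _ => norm_nonneg _

lemma bddAbove_range_norm_inner_apply_self (S : H →L[ℂ] H) :
    BddAbove (Set.range fun x : {x : H // ‖x‖ = 1} => ‖inner ℂ (S x) (x : H)‖) := by
  refine ⟨‖S‖, ?_⟩
  rintro _ ⟨⟨x, hx⟩, rfl⟩
  calc ‖inner ℂ (S x) x‖ ≤ ‖S x‖ * ‖x‖ := norm_inner_le_norm _ _
    _ ≤ ‖S‖ * ‖x‖ * ‖x‖ := by gcongr; exact S.le_opNorm x
    _ = ‖S‖ := by rw [hx, mul_one, mul_one]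

lemma norm_inner_apply_self_le_numRadius (S : H →L[ℂ] H) {x : H} (hx : ‖x‖ = 1) :
    ‖inner ℂ (S x) x‖ ≤ numRadius S :=
  le_ciSup (bddAbove_range_norm_inner_apply_self S) (⟨x, hx⟩ : {x : H // ‖x‖ = 1})

lemma numRadius_le_of_forall {S : H →L[ℂ] H} {C : ℝ} (hC : 0 ≤ C)
    (h : ∀ x : H, ‖x‖ = 1 → ‖inner ℂ (S x) x‖ ≤ C) : numRadius S ≤ C :=
  Real.iSup_le (fun x => h x x.2) hC

lemma numRadius_add_le (S R : H →L[ℂ] H) : numRadius (S + R) ≤ numRadius S + numRadius R :=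
  numRadius_le_of_forall (add_nonneg (numRadius_nonneg S) (numRadius_nonneg R)) fun x hx =>
    calc ‖inner ℂ ((S + R) x) x‖ ≤ ‖inner ℂ (S x) x‖ + ‖inner ℂ (R x) x‖ := by
          rw [add_apply, inner_add_left]; exact norm_add_le _ _
      _ ≤ numRadius S + numRadius R :=
          add_le_add (norm_inner_apply_self_le_numRadius S hx)
            (norm_inner_apply_self_le_numRadius R hx)

lemma numRadius_smul (c : ℂ) (S : H →L[ℂ] H) : numRadius (c • S) = ‖c‖ * numRadius S := by
  simp only [numRadius, smul_apply, inner_smul_left, norm_mul, Complex.norm_conj]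
  exact (Real.mul_iSup_of_nonneg (norm_nonneg c) _).symm

lemma sq_norm_le_numRadius_adjoint_comp_self [CompleteSpace H] (A : H →L[ℂ] H) :
    ‖A‖ ^ 2 ≤ numRadius (adjoint A ∘L A) := by
  have hω := numRadius_nonneg (adjoint A ∘L A)
  suffices ‖A‖ ≤ √(numRadius (adjoint A ∘L A)) by
    simpa [Real.sq_sqrt hω] using pow_le_pow_left₀ (norm_nonneg A) this 2
  refine opNorm_le_of_unit_norm (Real.sqrt_nonneg _) fun x hx => ?_
  rw [Real.le_sqrt (norm_nonneg _) hω, apply_norm_sq_eq_inner_adjoint_left]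
  exact (Complex.re_le_norm _).trans (norm_inner_apply_self_le_numRadius _ hx)

end NumRadius

section ReOp

variable {H : Type*} [NormedAddCommGroup H] [InnerProductSpace ℂ H] [CompleteSpace H]

lemma adjoint_reOp (T : H →L[ℂ] H) : adjoint (reOp T) = reOp T := by
  rw [reOp, ← star_eq_adjoint, star_smul, star_add, star_eq_adjoint, star_eq_adjoint,
    adjoint_adjoint, add_comm, star_inv₀, star_ofNat]

lemma reOp_comp_reOp (T : H →L[ℂ] H) :
    reOp T ∘L reOp T = (2 : ℂ)⁻¹ • (adjoint T ∘L reOp T + T ∘L reOp T) := by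
  nth_rw 1 [reOp]
  rw [smul_comp, add_comp, add_comm]

end ReOp

theorem norm_re_sq_le
    {H : Type*} [NormedAddCommGroup H] [InnerProductSpace ℂ H] [CompleteSpace H]
    (T : H →L[ℂ] H) :
    ‖reOp T‖ ^ 2 ≤
      (1 / 2) * (numRadius (adjoint T ∘L reOp T) + numRadius (T ∘L reOp T)) := by
  calc ‖reOp T‖ ^ 2 ≤ numRadius (adjoint (reOp T) ∘L reOp T) :=
        sq_norm_le_numRadius_adjoint_comp_self _
    _ = (1 / 2) * numRadius (adjoint T ∘L reOp T + T ∘L reOp T) := by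
        rw [adjoint_reOp, reOp_comp_reOp, numRadius_smul]; norm_num
    _ ≤ (1 / 2) * (numRadius (adjoint T ∘L reOp T) + numRadius (T ∘L reOp T)) := by
        gcongr; exact numRadius_add_le _ _
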